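/- arXiv:1803.02289 — 2 statements merged into one kernel-verified Lean document; each statement's English description precedes it below -/
import Mathlib

section
/- Let G = (V,E) be a finite undirected graph, D = V × {1,2,3}, and for each edge {u,v} let F^{⟨u,v⟩} : D² → {0,∞} be defined by F^{⟨u,v⟩}((u,a),(v,b)) = 0 if a ≠ b, and F^{⟨u,v⟩}(y₁,y₂) = ∞ in all other cases. Suppose g : D → D satisfies: (i) g maps each fiber {v}×{1,2,3} into itself, (ii) g preserves the zero set of each F^{⟨u,v⟩}, and (iii) |g(D)| = |V|. Then the map x* : V → {1,2,3} defined by g({v}×{1,2,3}) = {(v, x*_v)} is a proper 3-coloring of G. -/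
/-- The lifted edge cost function `F^{⟨u,v⟩}` on `D = V × Fin 3`:
value `0` when the pair is `((u,a),(v,b))` with `a ≠ b`, and `∞` otherwise. -/
def liftF {V : Type*} [DecidableEq V] (u v : V)
    (y₁ y₂ : V × Fin 3) : WithTop ℚ :=
  if y₁.1 = u ∧ y₂.1 = v ∧ y₁.2 ≠ y₂.2 then 0 else ⊤

theorem stmt_14 {V : Type*} [Fintype V] [DecidableEq V]
    (G : SimpleGraph V)
    (g : V × Fin 3 → V × Fin 3)
    (hfiber : ∀ p : V × Fin 3, (g p).1 = p.1)
    (hpres : ∀ u v : V, G.Adj u v →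
      ∀ y₁ y₂ : V × Fin 3, liftF u v y₁ y₂ = 0 →
        liftF u v (g y₁) (g y₂) = 0)
    (hcard : (Set.range g).ncard = Fintype.card V) :
    ∃ xstar : V → Fin 3,
      (∀ v : V, ∀ a : Fin 3, g (v, a) = (v, xstar v)) ∧
      (∀ u v : V, G.Adj u v → xstar u ≠ xstar v) := by
  classical
  set f : Set.range g → V := fun p => p.1.1 with hf
  have hsurj : Function.Surjective f := by
    intro v
    exact ⟨⟨g (v, 0), Set.mem_range_self _⟩, hfiber (v, 0)⟩
  have hcardeq : Fintype.card (Set.range g) = Fintype.card V := by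
    rw [← Nat.card_eq_fintype_card, Nat.card_coe_set_eq, hcard]
  have hbij : Function.Bijective f :=
    (Fintype.bijective_iff_surjective_and_card f).2 ⟨hsurj, hcardeq⟩
  have hconst : ∀ (v : V) (a : Fin 3), g (v, a) = g (v, 0) := by
    intro v a
    have h := hbij.1 (a₁ := ⟨g (v, a), Set.mem_range_self _⟩)
      (a₂ := ⟨g (v, 0), Set.mem_range_self _⟩)
      (by simp [hf, hfiber (v, a), hfiber (v, 0)])
    exact Subtype.ext_iff.mp h
  refine ⟨fun v => (g (v, 0)).2, ?_, ?_⟩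
  · intro v a
    rw [hconst v a]
    exact Prod.ext (hfiber (v, 0)) rfl
  · intro u v huv
    have h0 : liftF u v (u, 0) (v, 1) = 0 := by
      simp [liftF]
    have h := hpres u v huv (u, 0) (v, 1) h0
    rw [liftF] at h
    split at h
    · rename_i hcond
      have := hcond.2.2
      rw [hconst v 1] at this
      exact this
    · simp at h
end

section
/- Let D be a finite set, G a composition-closed set of functions D → D containing the identity, and B = g(D) for some g ∈ G with |B| = min { |h(D)| : h ∈ G }. Then for every h ∈ G there exists k ≥ 1 such that (h∘g)^k fixes every element of B and maps D into B. -/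
theorem stmt_16 {D : Type*} [Fintype D] (G : Set (D → D))
    (hid : id ∈ G)
    (hcomp : ∀ g ∈ G, ∀ h ∈ G, h ∘ g ∈ G)
    (g : D → D) (hg : g ∈ G)
    (hmin : ∀ h ∈ G, (Set.range g).ncard ≤ (Set.range h).ncard)
    (h : D → D) (hh : h ∈ G)
    (himg : Set.range (h ∘ g) = Set.range g) :
    ∃ k : ℕ, 1 ≤ k ∧ (∀ a ∈ Set.range g, (h ∘ g)^[k] a = a) ∧
      (∀ x : D, (h ∘ g)^[k] x ∈ Set.range g) := by
  classical
  set f := h ∘ g with hf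
  set B := Set.range g with hB
  have hmem : ∀ x, f x ∈ B := fun x => himg ▸ Set.mem_range_self x
  -- f ∘ g ∈ G
  have hfg : f ∘ g ∈ G := hcomp g hg f (hcomp g hg h hh)
  have hrange : Set.range (f ∘ g) = f '' B := by
    rw [Set.range_comp]
  have hsub : f '' B ⊆ B := by
    rintro y ⟨x, hx, rfl⟩; exact hmem x
  have hle : B.ncard ≤ (f '' B).ncard := hrange ▸ hmin _ hfg
  have hge : (f '' B).ncard ≤ B.ncard := Set.ncard_le_ncard hsub B.toFinite
  have hinjOn : Set.InjOn f B :=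
    Set.injOn_of_ncard_image_eq (le_antisymm hge hle) B.toFinite
  let e : B → B := fun a => ⟨f a, hmem a⟩
  have hinj : Function.Injective e := by
    rintro a b hab
    exact Subtype.ext (hinjOn a.2 b.2 (congrArg Subtype.val hab))
  have hbij : Function.Bijective e := Finite.injective_iff_bijective.mp hinj
  let π : Equiv.Perm B := Equiv.ofBijective e hbij
  have hiter : ∀ (n : ℕ) (a : B), f^[n] a = ((π ^ n) a : B) := by
    intro n
    induction n with
    | zero => intro a; simp
    | succ n ih =>
      intro a
      have h1 : f^[n + 1] (a : D) = f^[n] (f a) := Function.iterate_succ_apply f n a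
      have h2 : (π ^ (n + 1)) a = (π ^ n) (π a) := by
        rw [pow_succ]; rfl
      rw [h1, h2]
      have : π a = e a := rfl
      rw [this]
      exact ih (e a)
  obtain ⟨k, hk, hk1⟩ : ∃ k, 0 < k ∧ π ^ k = 1 :=
    ⟨orderOf π, orderOf_pos π, pow_orderOf_eq_one π⟩
  refine ⟨k, hk, ?_, ?_⟩
  · intro a ha
    have := hiter k ⟨a, ha⟩
    rw [hk1] at this
    simpa using this
  · intro x
    obtain ⟨m, rfl⟩ := Nat.exists_eq_add_of_le hk
    rw [add_comm, Function.iterate_succ_apply]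
    have := hiter m ⟨f x, hmem x⟩
    rw [this]
    exact ((π ^ m) ⟨f x, hmem x⟩).2
end
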